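/- arXiv:2006.06998 — 2 statements merged into one kernel-verified Lean document; each statement's English description precedes it below -/
import Mathlib

section
/- Let X_1 and X_2 be independent integrable real random variables, A_1 = [a_1,b_1], A_2 = [a_2,b_2] intervals with P(X_1 ∈ A_1) > 0 and P(X_2 ∈ A_2) > 0. Define c_1 = −E[X_2·1{X_2∈A_2}]/P(X_2∈A_2), c_2 = −E[X_1·1{X_1∈A_1}]/P(X_1∈A_1), and m(x_1,x_2) = x_1 x_2 + c_1 x_1 + c_2 x_2. Then for every z ∈ [a_1,b_1], E[m(X_1,X_2)·1{X_1∈A_1, X_2∈A_2}] = P(X_1 ∈ A_1)·E[m(z, X_2)·1{X_2∈A_2}], and the symmetric identity holds in the second coordinate; consequently the theoretical CART-split criterion L_A*(i,z) vanishes for all i ∈ {1,2} and all z in the corresponding interval, while m is not constant on A_1 × A_2 (assuming a_1 < b_1 and a_2 < b_2). -/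
/-!
Write `m x₁ x₂ = (x₁ + c₂) * (x₂ + c₁) - c₁ * c₂`. The constants are chosen so that both factors
are centred on their cells: `-c₂` is the average of `X₁` over `{X₁ ∈ A₁}`, and `-c₁` that of `X₂`
over `{X₂ ∈ A₂}`. By independence the integral of the product over `{X₁ ∈ A₁, X₂ ∈ A₂}` is the
product of the two vanishing integrals, so every integral in the statement reduces to the
contribution of the constant `-c₁ * c₂`. Yet `m` is not constant on the cell, since its mixed
second difference over `A₁ × A₂` is `(b₁ - a₁) * (b₂ - a₂) ≠ 0`.
-/

open MeasureTheory ProbabilityTheory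

section

variable {Ω : Type*} [MeasurableSpace Ω] {μ : Measure Ω}

lemma setIntegral_sub_const [IsFiniteMeasure μ] {s : Set Ω} {f : Ω → ℝ}
    (hf : IntegrableOn f s μ) (d : ℝ) :
    ∫ x in s, (f x - d) ∂μ = ∫ x in s, f x ∂μ - μ.real s * d := by
  rw [integral_sub hf (integrable_const d), setIntegral_const, smul_eq_mul]

namespace ProbabilityTheory

lemma IndepFun.setIntegral_comp_mul_comp {X Y : Ω → ℝ} (hXY : IndepFun X Y μ)
    (hX : Measurable X) (hY : Measurable Y) {A B : Set ℝ} (hA : MeasurableSet A)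
    (hB : MeasurableSet B) {f g : ℝ → ℝ} (hf : Measurable f) (hg : Measurable g) :
    ∫ ω in {ω | X ω ∈ A ∧ Y ω ∈ B}, f (X ω) * g (Y ω) ∂μ =
      (∫ ω in {ω | X ω ∈ A}, f (X ω) ∂μ) * ∫ ω in {ω | Y ω ∈ B}, g (Y ω) ∂μ := by
  have hAf := hf.indicator hA
  have hBg := hg.indicator hB
  change ∫ ω in X ⁻¹' A ∩ Y ⁻¹' B, _ ∂μ = (∫ ω in X ⁻¹' A, _ ∂μ) * ∫ ω in Y ⁻¹' B, _ ∂μ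
  rw [← integral_indicator ((hX hA).inter (hY hB)), ← integral_indicator (hX hA),
    ← integral_indicator (hY hB)]
  simp_rw [Set.inter_indicator_mul]
  exact (hXY.comp hAf hBg).integral_fun_mul_eq_mul_integral
    (hAf.comp hX).aestronglyMeasurable (hBg.comp hY).aestronglyMeasurable

lemma IndepFun.setIntegral_comp_mul_comp_sub_const_of_centered [IsFiniteMeasure μ]
    {X Y : Ω → ℝ} (hXY : IndepFun X Y μ) (hX : Measurable X) (hY : Measurable Y)
    {A B : Set ℝ} (hA : MeasurableSet A) (hB : MeasurableSet B) {f g : ℝ → ℝ}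
    (hf : Measurable f) (hg : Measurable g) (hfX : Integrable (fun ω => f (X ω)) μ)
    (hgY : Integrable (fun ω => g (Y ω)) μ) (hf₀ : ∫ ω in {ω | X ω ∈ A}, f (X ω) ∂μ = 0)
    (hg₀ : ∫ ω in {ω | Y ω ∈ B}, g (Y ω) ∂μ = 0) (d : ℝ) :
    ∫ ω in {ω | X ω ∈ A ∧ Y ω ∈ B}, (f (X ω) * g (Y ω) - d) ∂μ =
      -(μ.real {ω | X ω ∈ A} * μ.real {ω | Y ω ∈ B} * d) := by
  have hprod : Integrable (fun ω => f (X ω) * g (Y ω)) μ :=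
    (hXY.comp hf hg).integrable_mul hfX hgY
  have hcell : μ.real {ω | X ω ∈ A ∧ Y ω ∈ B} = μ.real {ω | X ω ∈ A} * μ.real {ω | Y ω ∈ B} := by
    simp only [measureReal_def, ← ENNReal.toReal_mul]
    exact congrArg ENNReal.toReal (hXY.measure_inter_preimage_eq_mul _ _ hA hB)
  rw [setIntegral_sub_const hprod.integrableOn, hXY.setIntegral_comp_mul_comp hX hY hA hB hf hg,
    hf₀, hg₀, hcell]
  ring

end ProbabilityTheory

lemma setIntegral_add_eq_zero_of_eq_neg_div {s : Set Ω} (hs : μ s ≠ ⊤) (f : Ω → ℝ) {c : ℝ}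
    (hc : c = -(∫ x in s, f x ∂μ) / (μ s).toReal) :
    ∫ x in s, (f x + c) ∂μ = 0 := by
  have hc' : c = -⨍ x in s, f x ∂μ := by
    rw [hc, setAverage_eq, smul_eq_mul, measureReal_def]; ring
  simpa only [hc', ← sub_eq_add_neg] using setAverage_sub_setAverage hs f

end

lemma exists_ne_on_Icc_prod_of_eq_mul_add {a₁ b₁ a₂ b₂ c₁ c₂ : ℝ} (hab₁ : a₁ < b₁)
    (hab₂ : a₂ < b₂) {m : ℝ → ℝ → ℝ} (hm : ∀ x₁ x₂, m x₁ x₂ = x₁ * x₂ + c₁ * x₁ + c₂ * x₂) :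
    ∃ p q p' q', p ∈ Set.Icc a₁ b₁ ∧ q ∈ Set.Icc a₂ b₂ ∧
      p' ∈ Set.Icc a₁ b₁ ∧ q' ∈ Set.Icc a₂ b₂ ∧ m p q ≠ m p' q' := by
  have hmixed : m b₁ b₂ - m a₁ b₂ - (m b₁ a₂ - m a₁ a₂) = (b₁ - a₁) * (b₂ - a₂) := by
    simp only [hm]; ring
  have hpos : 0 < (b₁ - a₁) * (b₂ - a₂) := mul_pos (sub_pos.2 hab₁) (sub_pos.2 hab₂)
  have ha₁ := Set.left_mem_Icc.2 hab₁.le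
  have hb₁ := Set.right_mem_Icc.2 hab₁.le
  have ha₂ := Set.left_mem_Icc.2 hab₂.le
  have hb₂ := Set.right_mem_Icc.2 hab₂.le
  by_cases h : m b₁ a₂ = m a₁ a₂
  · exact ⟨b₁, b₂, a₁, b₂, hb₁, hb₂, ha₁, hb₂, fun h' => by linarith⟩
  · exact ⟨b₁, a₂, a₁, a₂, hb₁, ha₂, ha₁, ha₂, h⟩

theorem stmt7_general {Ω : Type*} [MeasurableSpace Ω] (μ : Measure Ω) [IsProbabilityMeasure μ]
    (X₁ X₂ : Ω → ℝ) (h₁ : Measurable X₁) (h₂ : Measurable X₂)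
    (hint₁ : Integrable X₁ μ) (hint₂ : Integrable X₂ μ)
    (hind : IndepFun X₁ X₂ μ)
    (a₁ b₁ a₂ b₂ : ℝ) (hab₁ : a₁ < b₁) (hab₂ : a₂ < b₂)
    (c₁ c₂ : ℝ)
    (hc₁ : c₁ = -(∫ ω in {ω | X₂ ω ∈ Set.Icc a₂ b₂}, X₂ ω ∂μ) /
        (μ {ω | X₂ ω ∈ Set.Icc a₂ b₂}).toReal)
    (hc₂ : c₂ = -(∫ ω in {ω | X₁ ω ∈ Set.Icc a₁ b₁}, X₁ ω ∂μ) /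
        (μ {ω | X₁ ω ∈ Set.Icc a₁ b₁}).toReal)
    (m : ℝ → ℝ → ℝ) (hm : ∀ x₁ x₂, m x₁ x₂ = x₁ * x₂ + c₁ * x₁ + c₂ * x₂) :
    (∀ z ∈ Set.Icc a₁ b₁,
      ∫ ω in {ω | X₁ ω ∈ Set.Icc a₁ b₁ ∧ X₂ ω ∈ Set.Icc a₂ b₂}, m (X₁ ω) (X₂ ω) ∂μ =
        (μ {ω | X₁ ω ∈ Set.Icc a₁ b₁}).toReal *
          ∫ ω in {ω | X₂ ω ∈ Set.Icc a₂ b₂}, m z (X₂ ω) ∂μ) ∧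
    (∀ z ∈ Set.Icc a₂ b₂,
      ∫ ω in {ω | X₁ ω ∈ Set.Icc a₁ b₁ ∧ X₂ ω ∈ Set.Icc a₂ b₂}, m (X₁ ω) (X₂ ω) ∂μ =
        (μ {ω | X₂ ω ∈ Set.Icc a₂ b₂}).toReal *
          ∫ ω in {ω | X₁ ω ∈ Set.Icc a₁ b₁}, m (X₁ ω) z ∂μ) ∧
    (∃ p q p' q', p ∈ Set.Icc a₁ b₁ ∧ q ∈ Set.Icc a₂ b₂ ∧
      p' ∈ Set.Icc a₁ b₁ ∧ q' ∈ Set.Icc a₂ b₂ ∧ m p q ≠ m p' q') := by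
  have hm' : ∀ x₁ x₂, m x₁ x₂ = (x₁ + c₂) * (x₂ + c₁) - c₁ * c₂ := fun _ _ => by rw [hm]; ring
  have hF₁ : Integrable (fun ω => X₁ ω + c₂) μ := hint₁.add (integrable_const c₂)
  have hF₂ : Integrable (fun ω => X₂ ω + c₁) μ := hint₂.add (integrable_const c₁)
  have hcen₁ := setIntegral_add_eq_zero_of_eq_neg_div (measure_ne_top μ _) X₁ hc₂
  have hcen₂ := setIntegral_add_eq_zero_of_eq_neg_div (measure_ne_top μ _) X₂ hc₁
  have hjoint := hind.setIntegral_comp_mul_comp_sub_const_of_centered h₁ h₂ measurableSet_Icc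
    measurableSet_Icc (measurable_add_const c₂) (measurable_add_const c₁) hF₁ hF₂ hcen₁ hcen₂
    (c₁ * c₂)
  simp only [← hm', measureReal_def] at hjoint
  refine ⟨fun z _ => ?_, fun z _ => ?_, exists_ne_on_Icc_prod_of_eq_mul_add hab₁ hab₂ hm⟩
  · simp_rw [hjoint, hm', setIntegral_sub_const ((hF₂.const_mul (z + c₂)).integrableOn),
      integral_const_mul, hcen₂, measureReal_def]
    ring
  · simp_rw [hjoint, hm', mul_comm _ (z + c₁),
      setIntegral_sub_const ((hF₁.const_mul (z + c₁)).integrableOn),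
      integral_const_mul, hcen₁, measureReal_def]
    ring

theorem stmt7 {Ω : Type*} [MeasurableSpace Ω] (μ : Measure Ω) [IsProbabilityMeasure μ]
    (X₁ X₂ : Ω → ℝ) (h₁ : Measurable X₁) (h₂ : Measurable X₂)
    (hint₁ : Integrable X₁ μ) (hint₂ : Integrable X₂ μ)
    (hind : IndepFun X₁ X₂ μ)
    (a₁ b₁ a₂ b₂ : ℝ) (hab₁ : a₁ < b₁) (hab₂ : a₂ < b₂)
    (hp₁ : 0 < μ {ω | X₁ ω ∈ Set.Icc a₁ b₁}) (hp₂ : 0 < μ {ω | X₂ ω ∈ Set.Icc a₂ b₂})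
    (c₁ c₂ : ℝ)
    (hc₁ : c₁ = -(∫ ω in {ω | X₂ ω ∈ Set.Icc a₂ b₂}, X₂ ω ∂μ) /
        (μ {ω | X₂ ω ∈ Set.Icc a₂ b₂}).toReal)
    (hc₂ : c₂ = -(∫ ω in {ω | X₁ ω ∈ Set.Icc a₁ b₁}, X₁ ω ∂μ) /
        (μ {ω | X₁ ω ∈ Set.Icc a₁ b₁}).toReal)
    (m : ℝ → ℝ → ℝ) (hm : ∀ x₁ x₂, m x₁ x₂ = x₁ * x₂ + c₁ * x₁ + c₂ * x₂) :
    (∀ z ∈ Set.Icc a₁ b₁,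
      ∫ ω in {ω | X₁ ω ∈ Set.Icc a₁ b₁ ∧ X₂ ω ∈ Set.Icc a₂ b₂}, m (X₁ ω) (X₂ ω) ∂μ =
        (μ {ω | X₁ ω ∈ Set.Icc a₁ b₁}).toReal *
          ∫ ω in {ω | X₂ ω ∈ Set.Icc a₂ b₂}, m z (X₂ ω) ∂μ) ∧
    (∀ z ∈ Set.Icc a₂ b₂,
      ∫ ω in {ω | X₁ ω ∈ Set.Icc a₁ b₁ ∧ X₂ ω ∈ Set.Icc a₂ b₂}, m (X₁ ω) (X₂ ω) ∂μ =
        (μ {ω | X₂ ω ∈ Set.Icc a₂ b₂}).toReal *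
          ∫ ω in {ω | X₁ ω ∈ Set.Icc a₁ b₁}, m (X₁ ω) z ∂μ) ∧
    (∃ p q p' q', p ∈ Set.Icc a₁ b₁ ∧ q ∈ Set.Icc a₂ b₂ ∧
      p' ∈ Set.Icc a₁ b₁ ∧ q' ∈ Set.Icc a₂ b₂ ∧ m p q ≠ m p' q') :=
  stmt7_general μ X₁ X₂ h₁ h₂ hint₁ hint₂ hind a₁ b₁ a₂ b₂ hab₁ hab₂ c₁ c₂ hc₁ hc₂ m hm
end

section
/- Under the setting of the paper (a tree built from D_n with bootstrap randomness Θ, N^b(A_n(Θ)) the number of bootstrap observations falling in the cell A_n(Θ) containing x, and N^⋄(A_n(Θ)) the number of points of an independent sample D_n^⋄ falling in A_n(Θ)), for every ε > 0: P( |N^b(A_n(Θ)) − N^⋄(A_n(Θ))| > ε ) ≤ 24 (n+1)^{2d} e^{−ε²/(288 n)}. -/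
/-!
Instead of a VC inequality, the random cell is trapped between two boxes of a fixed finite
family. On every coordinate the thresholds are the `k/n`-quantiles of the marginal law of the
data, completed by `⊥` and `⊤`; every cell then has an inner and an outer box, taken from
`(2(n+1))^(2d)` boxes, whose `ν`-masses differ by at most `2d/n`. On a fixed box the three
deviations (bootstrap count versus data count, and data count, resp. second-sample count, versus
`n ν`) are sums of i.i.d. indicators, so Hoeffding's inequality applies to each of them; for the
bootstrap count it is applied conditionally on the data. A union bound over the boxes gives
`6 (2(n+1))^(2d) exp(-ε²/(18n))`, which is below the claimed bound as soon as the latter is below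
one, because then `4d ≤ ε` and the bracketing error `2d` is at most `ε/2`.
-/

open MeasureTheory ProbabilityTheory Set Filter Topology
open scoped ENNReal

/-- The axis-aligned box (tree cell) in `ℝ^d` with (possibly infinite) endpoints `a`, `b`. -/
def cellOf {d : ℕ} (a b : Fin d → EReal) : Set (Fin d → ℝ) :=
  {x | ∀ i, a i ≤ (x i : EReal) ∧ (x i : EReal) ≤ b i}

section Bracketing

variable {α A ι : Type*} [MeasurableSpace α]

def IsBracketing (ν : Measure α) (C : A → Set α) (B : ι → Set α) (δ : ℝ≥0∞) : Prop :=
  (∀ k, MeasurableSet (B k)) ∧ ∀ a, ∃ l u, B l ⊆ C a ∧ C a ⊆ B u ∧ ν (B u \ B l) ≤ δ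

namespace IsBracketing

variable {ν : Measure α} {C : A → Set α} {B : ι → Set α} {δ : ℝ≥0∞}

lemma comp {A' : Type*} (h : IsBracketing ν C B δ) (φ : A' → A) : IsBracketing ν (C ∘ φ) B δ :=
  ⟨h.1, fun a => h.2 (φ a)⟩

lemma preimage {β : Type*} [MeasurableSpace β] {ν : Measure β} {f : β → α} (hf : Measurable f)
    (h : IsBracketing (ν.map f) C B δ) :
    IsBracketing ν (fun a => f ⁻¹' C a) (fun k => f ⁻¹' B k) δ := by
  refine ⟨fun k => hf (h.1 k), fun a => ?_⟩
  obtain ⟨l, u, hl, hu, hgap⟩ := h.2 a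
  refine ⟨l, u, preimage_mono hl, preimage_mono hu, ?_⟩
  rwa [← preimage_sdiff, ← Measure.map_apply hf ((h.1 u).diff (h.1 l))]

lemma inter {A' ι' : Type*} {C' : A' → Set α} {B' : ι' → Set α} {δ' : ℝ≥0∞}
    (h : IsBracketing ν C B δ) (h' : IsBracketing ν C' B' δ') :
    IsBracketing ν (fun a : A × A' => C a.1 ∩ C' a.2) (fun k : ι × ι' => B k.1 ∩ B' k.2)
      (δ + δ') := by
  refine ⟨fun k => (h.1 k.1).inter (h'.1 k.2), fun a => ?_⟩
  obtain ⟨l, u, hl, hu, hgap⟩ := h.2 a.1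
  obtain ⟨l', u', hl', hu', hgap'⟩ := h'.2 a.2
  refine ⟨(l, l'), (u, u'), inter_subset_inter hl hl', inter_subset_inter hu hu', ?_⟩
  calc ν ((B u ∩ B' u') \ (B l ∩ B' l')) ≤ ν ((B u \ B l) ∪ (B' u' \ B' l')) :=
        measure_mono fun x hx => by by_cases x ∈ B l <;> simp_all
    _ ≤ δ + δ' := (measure_union_le _ _).trans (add_le_add hgap hgap')

lemma iInter {κ : Type*} [Fintype κ] {A ι : κ → Type*} {C : ∀ i, A i → Set α}
    {B : ∀ i, ι i → Set α} {δ : κ → ℝ≥0∞} (h : ∀ i, IsBracketing ν (C i) (B i) (δ i)) :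
    IsBracketing ν (fun a : ∀ i, A i => ⋂ i, C i (a i)) (fun k : ∀ i, ι i => ⋂ i, B i (k i))
      (∑ i, δ i) := by
  refine ⟨fun k => .iInter fun i => (h i).1 (k i), fun a => ?_⟩
  choose l u hl hu hgap using fun i => (h i).2 (a i)
  refine ⟨l, u, iInter_mono hl, iInter_mono hu, ?_⟩
  calc ν ((⋂ i, B i (u i)) \ ⋂ i, B i (l i)) ≤ ν (⋃ i, B i (u i) \ B i (l i)) :=
        measure_mono fun x hx => by simp_all
    _ ≤ ∑ i, ν (B i (u i) \ B i (l i)) := measure_iUnion_fintype_le _ _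
    _ ≤ ∑ i, δ i := Finset.sum_le_sum fun i _ => hgap i

end IsBracketing

end Bracketing

lemma exists_le_le_succ {α : Type*} [LinearOrder α] (q : ℕ → α) {a : α} (h0 : q 0 ≤ a) :
    ∀ m, a ≤ q (m + 1) → ∃ k ≤ m, q k ≤ a ∧ a ≤ q (k + 1)
  | 0, hm => ⟨0, le_rfl, h0, hm⟩
  | m + 1, hm => by
    rcases le_total (q (m + 1)) a with h | h
    · exact ⟨m + 1, le_rfl, h, hm⟩
    · obtain ⟨k, hk, hq⟩ := exists_le_le_succ q h0 m h
      exact ⟨k, hk.trans m.le_succ, hq⟩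

section Quantile

variable (ρ : Measure ℝ)

noncomputable def cdfQuantile (c : ℝ) : ℝ := sInf {t | c ≤ cdf ρ t}

variable {ρ} {c : ℝ}

lemma bddBelow_setOf_le_cdf (hc : 0 < c) : BddBelow {t | c ≤ cdf ρ t} := by
  obtain ⟨t₀, ht₀⟩ := ((tendsto_cdf_atBot ρ).eventually (eventually_lt_nhds hc)).exists
  exact ⟨t₀, fun t ht => le_of_not_gt fun htt => ((monotone_cdf ρ htt.le).trans_lt ht₀).not_ge ht⟩

lemma nonempty_setOf_le_cdf (hc : c < 1) : {t | c ≤ cdf ρ t}.Nonempty :=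
  ((tendsto_cdf_atTop ρ).eventually (eventually_ge_nhds hc)).exists

lemma cdf_lt_of_lt_cdfQuantile (hc : 0 < c) {t : ℝ} (ht : t < cdfQuantile ρ c) : cdf ρ t < c :=
  lt_of_not_ge fun h => (csInf_le (bddBelow_setOf_le_cdf hc) h).not_gt ht

lemma le_cdf_cdfQuantile (hc₀ : 0 < c) (hc₁ : c < 1) : c ≤ cdf ρ (cdfQuantile ρ c) := by
  refine ge_of_tendsto (((cdf ρ).right_continuous _).mono Ioi_subset_Ici_self) ?_
  filter_upwards [self_mem_nhdsWithin] with u hu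
  obtain ⟨s, hs, hsu⟩ :=
    (csInf_lt_iff (bddBelow_setOf_le_cdf hc₀) (nonempty_setOf_le_cdf hc₁)).1 hu
  exact hs.trans (monotone_cdf ρ hsu.le)

lemma measureReal_Iio_cdfQuantile_le [IsProbabilityMeasure ρ] (hc : 0 < c) :
    ρ.real (Iio (cdfQuantile ρ c)) ≤ c := by
  have h := (cdf ρ).measure_Iio (tendsto_cdf_atBot ρ) (cdfQuantile ρ c)
  rw [measure_cdf, sub_zero] at h
  rw [measureReal_def, h, ENNReal.toReal_ofReal
    ((cdf_nonneg ρ _).trans ((monotone_cdf ρ).le_leftLim (sub_one_lt _)))]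
  refine le_of_tendsto ((monotone_cdf ρ).tendsto_leftLim _) ?_
  filter_upwards [self_mem_nhdsWithin] with t ht using (cdf_lt_of_lt_cdfQuantile hc ht).le

end Quantile

section HalfLine

variable (ρ : Measure ℝ) [IsProbabilityMeasure ρ] (m : ℕ)

noncomputable def quantileGrid (k : ℕ) : EReal :=
  if k = 0 then ⊥ else if k < m then (cdfQuantile ρ (k / m) : EReal) else ⊤

variable {ρ m}

lemma div_le_measureReal_le_quantileGrid {k : ℕ} (hk : k ≤ m) :
    (k / m : ℝ) ≤ ρ.real {x | (x : EReal) ≤ quantileGrid ρ m k} := by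
  unfold quantileGrid
  split_ifs with hk₀ hkm
  · simp [hk₀]
  · have hm : (0 : ℝ) < m := by exact_mod_cast (Nat.pos_of_ne_zero hk₀).trans hkm
    have hset : {x : ℝ | (x : EReal) ≤ cdfQuantile ρ (k / m)} = Iic (cdfQuantile ρ (k / m)) := by
      ext; simp
    rw [hset, ← cdf_eq_real]
    exact le_cdf_cdfQuantile (div_pos (by exact_mod_cast Nat.pos_of_ne_zero hk₀) hm)
      ((div_lt_one hm).2 (by exact_mod_cast hkm))
  · simp only [le_top, ofPred_true, probReal_univ]
    exact div_le_one_of_le₀ (by exact_mod_cast hk) (Nat.cast_nonneg m)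

lemma measureReal_lt_quantileGrid_le {k : ℕ} (hk : k ≤ m) (hm : 0 < m) :
    ρ.real {x | (x : EReal) < quantileGrid ρ m k} ≤ k / m := by
  unfold quantileGrid
  split_ifs with hk₀ hkm
  · simp [hk₀]
  · have hset : {x : ℝ | (x : EReal) < cdfQuantile ρ (k / m)} = Iio (cdfQuantile ρ (k / m)) := by
      ext; simp
    rw [hset]
    exact measureReal_Iio_cdfQuantile_le
      (div_pos (by exact_mod_cast Nat.pos_of_ne_zero hk₀) (by exact_mod_cast hm))
  · rw [show k = m by omega, div_self (by positivity)]
    exact measureReal_le_one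

lemma measure_quantileGrid_gap_le {k : ℕ} (hk : k < m) :
    ρ {x | quantileGrid ρ m k < x ∧ (x : EReal) < quantileGrid ρ m (k + 1)}
      ≤ ENNReal.ofReal (1 / m) := by
  set s := quantileGrid ρ m k
  set t := quantileGrid ρ m (k + 1)
  rcases lt_or_ge s t with hst | hts
  · have hgap : {x : ℝ | s < x ∧ (x : EReal) < t} =
        {x : ℝ | (x : EReal) < t} \ {x : ℝ | (x : EReal) ≤ s} := by
      ext x; simp [and_comm]
    have hsub : {x : ℝ | (x : EReal) ≤ s} ⊆ {x | (x : EReal) < t} := fun x hx => hx.trans_lt hst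
    rw [← ofReal_measureReal, hgap,
      measureReal_sdiff hsub (measurableSet_le measurable_coe_real_ereal measurable_const)]
    refine ENNReal.ofReal_le_ofReal ?_
    have hlt := measureReal_lt_quantileGrid_le (ρ := ρ) hk (by omega)
    have hle := div_le_measureReal_le_quantileGrid (ρ := ρ) hk.le
    push_cast at hlt
    rw [add_div] at hlt
    linarith
  · have hgap : {x : ℝ | s < x ∧ (x : EReal) < t} = ∅ :=
      eq_empty_of_forall_notMem fun x hx => (hx.1.trans hx.2).not_ge hts
    simp [hgap]

lemma exists_isBracketing_coe_le (hm : 0 < m) :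
    ∃ B : Fin (m + 1) × Bool → Set ℝ,
      IsBracketing ρ (fun a : EReal => {x : ℝ | a ≤ x}) B (ENNReal.ofReal (1 / m)) := by
  set q := quantileGrid ρ m
  refine ⟨fun k => {x : ℝ | if k.2 then q k.1 ≤ x else q k.1 < x}, fun k => ?_, fun a => ?_⟩
  · obtain ⟨k, _ | _⟩ := k
    · exact measurableSet_lt measurable_const measurable_coe_real_ereal
    · exact measurableSet_le measurable_const measurable_coe_real_ereal
  obtain ⟨m, rfl⟩ := Nat.exists_eq_succ_of_ne_zero hm.ne'
  obtain ⟨k, hk, hka, hak⟩ := exists_le_le_succ q (a := a) (by simp [q, quantileGrid]) m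
    (by simp [q, quantileGrid])
  have hk' : k < m + 1 + 1 := by omega
  rcases hka.eq_or_lt with hka | hka
  · exact ⟨(⟨k, hk'⟩, true), (⟨k, hk'⟩, true), by simp [hka], by simp [hka], by simp⟩
  rcases hak.eq_or_lt with hak | hak
  · exact ⟨(⟨k + 1, by omega⟩, true), (⟨k + 1, by omega⟩, true), by simp [hak], by simp [hak],
      by simp⟩
  refine ⟨(⟨k + 1, by omega⟩, true), (⟨k, hk'⟩, false), fun x hx => hak.le.trans hx,
    fun x hx => hka.trans_le hx, (measure_mono fun x hx => ?_).trans
      (measure_quantileGrid_gap_le (k := k) (by omega))⟩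
  simpa using hx

end HalfLine

lemma exists_isBracketing_coe_mem_Icc {m : ℕ} (ρ : Measure ℝ) [IsProbabilityMeasure ρ]
    (hm : 0 < m) :
    ∃ B : (Fin (m + 1) × Bool) × (Fin (m + 1) × Bool) → Set ℝ,
      IsBracketing ρ (fun ab : EReal × EReal => {x : ℝ | ab.1 ≤ x ∧ (x : EReal) ≤ ab.2}) B
        (ENNReal.ofReal (2 / m)) := by
  have : IsProbabilityMeasure (ρ.map Neg.neg) :=
    Measure.isProbabilityMeasure_map measurable_neg.aemeasurable
  obtain ⟨B, hB⟩ := exists_isBracketing_coe_le (ρ := ρ) hm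
  obtain ⟨B', hB'⟩ := exists_isBracketing_coe_le (ρ := ρ.map Neg.neg) hm
  have hneg : (fun a => Neg.neg ⁻¹' {x : ℝ | a ≤ (x : EReal)}) ∘ (Neg.neg : EReal → EReal) =
      fun b => {x : ℝ | (x : EReal) ≤ b} := by
    ext b x
    simp [EReal.neg_le_neg_iff]
  have hle := (hB'.preimage measurable_neg).comp Neg.neg
  rw [hneg] at hle
  have hδ : ENNReal.ofReal (1 / m) + ENNReal.ofReal (1 / m) = ENNReal.ofReal (2 / m) := by
    rw [← ENNReal.ofReal_add (by positivity) (by positivity)]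
    ring_nf
  exact ⟨_, hδ ▸ hB.inter hle⟩

lemma exists_isBracketing_cellOf {d m : ℕ} (ν : Measure (Fin d → ℝ)) [IsProbabilityMeasure ν]
    (hm : 0 < m) :
    ∃ B : (Fin d → (Fin (m + 1) × Bool) × (Fin (m + 1) × Bool)) → Set (Fin d → ℝ),
      IsBracketing ν (fun ab : (Fin d → EReal) × (Fin d → EReal) => cellOf ab.1 ab.2) B
        (ENNReal.ofReal (2 * d / m)) := by
  have (i : Fin d) : IsProbabilityMeasure (ν.map fun x => x i) :=
    Measure.isProbabilityMeasure_map (measurable_pi_apply i).aemeasurable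
  choose B hB using fun i : Fin d => exists_isBracketing_coe_mem_Icc (ν.map fun x => x i) hm
  have hcell := (IsBracketing.iInter fun i => (hB i).preimage (measurable_pi_apply i)).comp
    fun ab : (Fin d → EReal) × (Fin d → EReal) => fun i => (ab.1 i, ab.2 i)
  have hC : (fun ab : (Fin d → EReal) × (Fin d → EReal) => cellOf ab.1 ab.2) =
      (fun a : Fin d → EReal × EReal => ⋂ i, (fun x : Fin d → ℝ => x i) ⁻¹'
          {y : ℝ | (a i).1 ≤ (y : EReal) ∧ (y : EReal) ≤ (a i).2}) ∘
        fun ab i => (ab.1 i, ab.2 i) := by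
    ext ab x
    simp [cellOf]
  have hδ : ∑ _i : Fin d, ENNReal.ofReal (2 / m) = ENNReal.ofReal (2 * d / m) := by
    rw [Finset.sum_const, Finset.card_univ, Fintype.card_fin, nsmul_eq_mul,
      ← ENNReal.ofReal_natCast, ← ENNReal.ofReal_mul (by positivity)]
    ring_nf
  exact ⟨_, hC ▸ hδ ▸ hcell⟩

lemma card_boxIndex (d m : ℕ) :
    Fintype.card (Fin d → (Fin (m + 1) × Bool) × (Fin (m + 1) × Bool)) =
      (2 * (m + 1)) ^ (2 * d) := by
  simp only [Fintype.card_pi, Fintype.card_prod, Fintype.card_fin, Fintype.card_bool,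
    Finset.prod_const, Finset.card_univ, pow_mul]
  ring

section SampleCount

variable {ι α : Type*} [Fintype ι]

noncomputable def sampleCount (S : Set α) (x : ι → α) : ℝ :=
  ∑ j, S.indicator (fun _ => (1 : ℝ)) (x j)

lemma sampleCount_nonneg (S : Set α) (x : ι → α) : 0 ≤ sampleCount S x :=
  Finset.sum_nonneg fun _ _ => indicator_nonneg (fun _ _ => zero_le_one) _

lemma sampleCount_le_card (S : Set α) (x : ι → α) : sampleCount S x ≤ Fintype.card ι := by
  simpa [sampleCount] using Finset.sum_le_sum fun j (_ : j ∈ Finset.univ) =>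
    indicator_le_self' (s := S) (f := fun _ => (1 : ℝ)) (fun _ _ => zero_le_one) (x j)

lemma abs_sampleCount_sub_sampleCount_le_card (S T : Set α) (x y : ι → α) :
    |sampleCount S x - sampleCount T y| ≤ Fintype.card ι :=
  abs_sub_le_of_nonneg_of_le (sampleCount_nonneg S x) (sampleCount_le_card S x)
    (sampleCount_nonneg T y) (sampleCount_le_card T y)

lemma sampleCount_mono {S T : Set α} (h : S ⊆ T) (x : ι → α) :
    sampleCount S x ≤ sampleCount T x :=
  Finset.sum_le_sum fun _ _ => indicator_le_indicator_of_subset h (fun _ => zero_le_one) _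

lemma sampleCount_comp {β : Type*} (S : Set α) (x : β → α) (y : ι → β) :
    sampleCount S (x ∘ y) = sampleCount (x ⁻¹' S) y :=
  rfl

lemma sampleCount_id (S : Set ι) [Fintype S] : sampleCount S id = S.toFinset.card := by
  classical
  simp [sampleCount, indicator_apply, Finset.sum_boole, Set.filter_mem_univ_eq_toFinset]

lemma measurable_sampleCount [MeasurableSpace α] {S : Set α} (hS : MeasurableSet S) :
    Measurable (sampleCount (ι := ι) S) :=
  Finset.measurable_sum _ fun j _ => (measurable_const.indicator hS).comp (measurable_pi_apply j)

lemma exists_deviation_of_isBracketing [MeasurableSpace α] {A κ : Type*} {ν : Measure α}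
    [IsFiniteMeasure ν] {C : A → Set α} {B : κ → Set α} {δ ε : ℝ}
    (hB : IsBracketing ν C B (ENNReal.ofReal δ)) (hδ : 0 ≤ δ)
    (hδε : Fintype.card ι * δ ≤ ε / 2) (a : A) {xb xd : ι → α} (x : ι → α)
    (h : ε < |sampleCount (C a) xb - sampleCount (C a) xd|) :
    ∃ k, ε / 6 < |sampleCount (B k) xb - sampleCount (B k) x| ∨
      ε / 6 < |sampleCount (B k) x - Fintype.card ι * ν.real (B k)| ∨
      ε / 6 < |sampleCount (B k) xd - Fintype.card ι * ν.real (B k)| := by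
  obtain ⟨l, u, hl, hu, hgap⟩ := hB.2 a
  have hν : Fintype.card ι * ν.real (B u) ≤ Fintype.card ι * ν.real (B l) + ε / 2 := by
    have := (le_measureReal_sdiff (μ := ν)).trans (ENNReal.toReal_le_of_le_ofReal hδ hgap)
    nlinarith [(Nat.cast_nonneg _ : (0 : ℝ) ≤ Fintype.card ι)]
  have hbl := sampleCount_mono hl xb
  have hbu := sampleCount_mono hu xb
  have hdl := sampleCount_mono hl xd
  have hdu := sampleCount_mono hu xd
  by_contra! hc
  obtain ⟨hl₁, hl₂, hl₃⟩ := hc l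
  obtain ⟨hu₁, hu₂, hu₃⟩ := hc u
  rw [abs_le] at hl₁ hl₂ hl₃ hu₁ hu₂ hu₃
  -- With `N y S := sampleCount S y`: `N xb (C a) - N xd (C a) ≤ (N xb - N x) (B u)`
  -- `+ (N x - nν) (B u) + nν (B u \ B l) + (nν - N xd) (B l)`, and symmetrically.
  rcases lt_abs.1 h with h | h <;> linarith

end SampleCount

section Hoeffding

open Real

variable {Ω : Type*} [MeasurableSpace Ω] {μ : Measure Ω} [IsProbabilityMeasure μ]

lemma measureReal_lt_abs_sum_sub_integral_le {ι : Type*} [Fintype ι] {Z : ι → Ω → ℝ}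
    (hind : iIndepFun Z μ) (hm : ∀ i, Measurable (Z i)) (hZ : ∀ i ω, Z i ω ∈ Icc (0 : ℝ) 1)
    {t : ℝ} (ht : 0 ≤ t) :
    μ.real {ω | t < |∑ i, (Z i ω - μ[Z i])|} ≤ 2 * exp (-2 * t ^ 2 / Fintype.card ι) := by
  have hcent : iIndepFun (fun i ω => Z i ω - μ[Z i]) μ := by
    exact hind.comp (fun (i : ι) (z : ℝ) => z - μ[Z i]) fun _ => measurable_id.sub_const _
  have hsub := HasSubgaussianMGF.sum_of_iIndepFun (c := fun _ => (‖(1 : ℝ) - 0‖₊ / 2) ^ 2)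
    (s := Finset.univ) hcent
    fun i _ => hasSubgaussianMGF_of_mem_Icc (hm i).aemeasurable (ae_of_all _ (hZ i))
  have hexp : exp (-t ^ 2 / (2 * ((∑ _i : ι, (‖(1 : ℝ) - 0‖₊ / 2) ^ 2 : NNReal) : ℝ))) =
      exp (-2 * t ^ 2 / Fintype.card ι) := by
    congr 1
    simp only [sub_zero, nnnorm_one, one_div, inv_pow, Finset.sum_const, Finset.card_univ,
      nsmul_eq_mul, NNReal.coe_mul, NNReal.coe_natCast, NNReal.coe_inv, NNReal.coe_pow,
      NNReal.coe_ofNat, neg_mul]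
    ring
  have h₁ := hsub.measure_ge_le ht
  have h₂ := hsub.neg.measure_ge_le ht
  simp only [Pi.neg_apply, hexp] at h₁ h₂
  calc μ.real {ω | t < |∑ i, (Z i ω - μ[Z i])|}
      ≤ μ.real ({ω | t ≤ ∑ i, (Z i ω - μ[Z i])} ∪ {ω | t ≤ -∑ i, (Z i ω - μ[Z i])}) :=
        measureReal_mono fun ω hω => by
          rcases lt_abs.1 (mem_ofPred.1 hω) with h | h
          exacts [Or.inl h.le, Or.inr h.le]
    _ ≤ _ := measureReal_union_le _ _
    _ ≤ 2 * exp (-2 * t ^ 2 / Fintype.card ι) := by linarith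

lemma measureReal_lt_abs_sampleCount_sub_le {ι E : Type*} [Fintype ι] [MeasurableSpace E]
    {ξ : ι → Ω → E} (hind : iIndepFun ξ μ) (hm : ∀ i, Measurable (ξ i)) {S : Set E}
    (hS : MeasurableSet S) {p : ℝ} (hp : ∀ i, μ.real (ξ i ⁻¹' S) = p) {t : ℝ} (ht : 0 ≤ t) :
    μ.real {ω | t < |sampleCount S (fun i => ξ i ω) - Fintype.card ι * p|}
      ≤ 2 * exp (-2 * t ^ 2 / Fintype.card ι) := by
  have hmean (i : ι) : μ[fun ω => S.indicator (fun _ => (1 : ℝ)) (ξ i ω)] = p :=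
    (integral_indicator_one ((hm i) hS)).trans (hp i)
  have h := measureReal_lt_abs_sum_sub_integral_le
    (hind.comp (fun _ => S.indicator fun _ => (1 : ℝ)) fun _ => measurable_const.indicator hS)
    (fun i => (measurable_const.indicator hS).comp (hm i))
    (fun i ω => ⟨indicator_nonneg (fun _ _ => zero_le_one) _,
      indicator_le_self' (fun _ _ => zero_le_one) _⟩) ht
  simp only [Function.comp_apply, hmean, Finset.sum_sub_distrib, Finset.sum_const,
    Finset.card_univ, nsmul_eq_mul] at h
  exact h

end Hoeffding

section Bootstrap

open Real

variable {Ω : Type*} [MeasurableSpace Ω] {μ : Measure Ω} [IsProbabilityMeasure μ]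

lemma ProbabilityTheory.IndepFun.measure_prodMk_preimage_le {α β : Type*} [MeasurableSpace α]
    [MeasurableSpace β] {X : Ω → α} {Y : Ω → β} (hXY : IndepFun X Y μ) (hX : Measurable X)
    (hY : Measurable Y) {D : Set (α × β)} (hD : MeasurableSet D) {c : ℝ≥0∞}
    (hc : ∀ x, μ (Y ⁻¹' {y | (x, y) ∈ D}) ≤ c) :
    μ ((fun ω => (X ω, Y ω)) ⁻¹' D) ≤ c := by
  have : IsProbabilityMeasure (μ.map X) := Measure.isProbabilityMeasure_map hX.aemeasurable
  rw [← Measure.map_apply (hX.prodMk hY) hD,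
    (indepFun_iff_map_prod_eq_prod_map_map hX.aemeasurable hY.aemeasurable).1 hXY,
    Measure.prod_apply hD]
  calc ∫⁻ x, μ.map Y (Prod.mk x ⁻¹' D) ∂μ.map X ≤ ∫⁻ _, c ∂μ.map X :=
        lintegral_mono fun x => (Measure.map_apply hY (measurable_prodMk_left hD)).trans_le (hc x)
    _ = c := by simp

lemma measureReal_preimage_eq_of_uniform {n : ℕ} {I : Ω → Fin n} (hI : Measurable I)
    (hunif : ∀ k, μ {ω | I ω = k} = (n : ℝ≥0∞)⁻¹) (F : Set (Fin n)) :
    μ.real (I ⁻¹' F) = sampleCount F id / n := by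
  classical
  have hfib : ∀ k ∈ F.toFinset, μ.real (I ⁻¹' {k}) = (n : ℝ)⁻¹ := fun k _ => by
    rw [measureReal_def, ← ENNReal.toReal_natCast n, ← ENNReal.toReal_inv]
    exact congrArg ENNReal.toReal (hunif k)
  rw [sampleCount_id, ← coe_toFinset F, ← sum_measureReal_preimage_singleton _
    fun k _ => hI (measurableSet_singleton k), Finset.sum_congr rfl hfib]
  simp [div_eq_mul_inv]

lemma measurable_sampleCount_comp {E : Type*} [MeasurableSpace E] {n : ℕ} {S : Set E}
    (hS : MeasurableSet S) :
    Measurable fun p : (Fin n → E) × (Fin n → Fin n) => sampleCount S (p.1 ∘ p.2) :=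
  measurable_from_prod_countable_left fun i =>
    (measurable_sampleCount hS).comp (measurable_pi_lambda _ fun j => measurable_pi_apply (i j))

lemma measureReal_lt_abs_bootstrap_sub_le {E : Type*} [MeasurableSpace E] {n : ℕ} (hn : 0 < n)
    {X : Ω → Fin n → E} (hX : Measurable X) {I : Fin n → Ω → Fin n} (hI : ∀ j, Measurable (I j))
    (hIind : iIndepFun I μ) (hunif : ∀ j k, μ {ω | I j ω = k} = (n : ℝ≥0∞)⁻¹)
    (hXI : IndepFun X (fun ω j => I j ω) μ) {S : Set E} (hS : MeasurableSet S) {t : ℝ}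
    (ht : 0 ≤ t) :
    μ.real {ω | t < |sampleCount S (fun j => X ω (I j ω)) - sampleCount S (X ω)|}
      ≤ 2 * exp (-2 * t ^ 2 / n) := by
  let D : Set ((Fin n → E) × (Fin n → Fin n)) :=
    {p | t < |sampleCount S (p.1 ∘ p.2) - sampleCount S p.1|}
  have hD : MeasurableSet D := measurableSet_lt measurable_const
    ((measurable_sampleCount_comp hS).sub ((measurable_sampleCount hS).comp measurable_fst)).abs
  refine ENNReal.toReal_le_of_le_ofReal (by positivity) (hXI.measure_prodMk_preimage_le hX
    (measurable_pi_lambda _ hI) hD fun x => ?_)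
  have hp (j : Fin n) : μ.real (I j ⁻¹' (x ⁻¹' S)) = sampleCount (x ⁻¹' S) id / n :=
    measureReal_preimage_eq_of_uniform (hI j) (hunif j) _
  have h := measureReal_lt_abs_sampleCount_sub_le hIind hI .of_discrete hp ht
  rw [Fintype.card_fin, mul_div_cancel₀ _ (by positivity), ← sampleCount_comp] at h
  rwa [ENNReal.le_ofReal_iff_toReal_le (measure_ne_top _ _) (by positivity)]

end Bootstrap

section Deviation

open Real

variable {Ω E : Type*} [MeasurableSpace Ω] [MeasurableSpace E] {μ : Measure Ω}
  [IsProbabilityMeasure μ] {n : ℕ} {X Xd : Fin n → Ω → E} {I : Fin n → Ω → Fin n}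
  {ν : Measure E}

lemma measureReal_exists_deviation_le (hn : 0 < n)
    (hXm : ∀ j, Measurable (X j)) (hXdm : ∀ j, Measurable (Xd j))
    (hXindep : iIndepFun X μ) (hXdindep : iIndepFun Xd μ)
    (hXν : ∀ j, μ.map (X j) = ν) (hXdν : ∀ j, μ.map (Xd j) = ν)
    (hIm : ∀ j, Measurable (I j)) (hIindep : iIndepFun I μ)
    (hIunif : ∀ j k, μ {ω | I j ω = k} = (n : ℝ≥0∞)⁻¹)
    (hXI : IndepFun (fun ω j => X j ω) (fun ω j => I j ω) μ)
    {κ : Type*} [Fintype κ] {B : κ → Set E} (hB : ∀ k, MeasurableSet (B k)) {t : ℝ}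
    (ht : 0 ≤ t) :
    μ.real {ω | ∃ k,
        t < |sampleCount (B k) (fun j => X (I j ω) ω) - sampleCount (B k) (fun j => X j ω)| ∨
        t < |sampleCount (B k) (fun j => X j ω) - Fintype.card (Fin n) * ν.real (B k)| ∨
        t < |sampleCount (B k) (fun j => Xd j ω) - Fintype.card (Fin n) * ν.real (B k)|}
      ≤ Fintype.card κ * (3 * (2 * exp (-2 * t ^ 2 / n))) := by
  rw [Fintype.card_fin]
  have hp (Y : Fin n → Ω → E) (hY : ∀ j, Measurable (Y j)) (hYν : ∀ j, μ.map (Y j) = ν) (k : κ)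
      (j : Fin n) : μ.real (Y j ⁻¹' B k) = ν.real (B k) := by
    rw [← hYν j, map_measureReal_apply (hY j) (hB k)]
  have hbox (k : κ) : μ.real {ω |
        t < |sampleCount (B k) (fun j => X (I j ω) ω) - sampleCount (B k) (fun j => X j ω)| ∨
        t < |sampleCount (B k) (fun j => X j ω) - n * ν.real (B k)| ∨
        t < |sampleCount (B k) (fun j => Xd j ω) - n * ν.real (B k)|}
      ≤ 3 * (2 * exp (-2 * t ^ 2 / n)) := by
    have h₁ := measureReal_lt_abs_bootstrap_sub_le hn (measurable_pi_lambda _ hXm) hIm hIindep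
      hIunif hXI (hB k) ht
    have h₂ := measureReal_lt_abs_sampleCount_sub_le hXindep hXm (hB k) (hp X hXm hXν k) ht
    have h₃ := measureReal_lt_abs_sampleCount_sub_le hXdindep hXdm (hB k) (hp Xd hXdm hXdν k) ht
    rw [Fintype.card_fin] at h₂ h₃
    rw [ofPred_or, ofPred_or]
    refine (measureReal_union_le _ _).trans
      ((add_le_add_right (measureReal_union_le _ _) _).trans ?_)
    linarith
  rw [ofPred_exists]
  calc _ ≤ ∑ k, _ := measureReal_iUnion_fintype_le _
    _ ≤ ∑ _k : κ, 3 * (2 * exp (-2 * t ^ 2 / n)) := Finset.sum_le_sum fun k _ => hbox k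
    _ = _ := by simp

end Deviation

section Arithmetic

open Real

lemma four_mul_le_of_pow_mul_exp_le_one {n d : ℕ} {ε : ℝ} (hε : 0 < ε) (hεn : ε < n)
    (h : ((n : ℝ) + 1) ^ (2 * d) * exp (-(ε ^ 2) / (288 * n)) ≤ 1) : 4 * d ≤ ε := by
  have hn : (1 : ℝ) ≤ n := Nat.one_le_cast.2 (Nat.cast_pos.1 (hε.trans hεn))
  have hlog := log_nonpos (by positivity) h
  rw [log_mul (by positivity) (exp_pos _).ne', log_pow, log_exp, neg_div] at hlog
  have hlog2 : log 2 ≤ log (n + 1) := log_le_log two_pos (by linarith)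
  have hsq : ε ^ 2 / (288 * n) ≤ ε / 288 := by
    rw [div_le_div_iff₀ (by positivity) (by norm_num)]
    nlinarith
  have hd : 2 * d * log 2 ≤ ε / 288 := by
    push_cast at hlog
    nlinarith [mul_le_mul_of_nonneg_left hlog2 (by positivity : (0 : ℝ) ≤ 2 * d)]
  nlinarith [log_two_gt_d9, Nat.cast_nonneg (α := ℝ) d]

lemma card_mul_hoeffding_le_of_pow_mul_exp_le_one {n d : ℕ} {ε : ℝ} (hn : 0 < n)
    (h : ((n : ℝ) + 1) ^ (2 * d) * exp (-(ε ^ 2) / (288 * n)) ≤ 1) :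
    (2 * ((n : ℝ) + 1)) ^ (2 * d) * (3 * (2 * exp (-2 * (ε / 6) ^ 2 / n)))
      ≤ 24 * (n + 1) ^ (2 * d) * exp (-(ε ^ 2) / (288 * n)) := by
  set P := ((n : ℝ) + 1) ^ (2 * d)
  set Q := exp (-(ε ^ 2) / (288 * n))
  have hn1 : (1 : ℝ) ≤ n := by exact_mod_cast hn
  have hP : 1 ≤ P := one_le_pow₀ (by linarith)
  have hQ : 0 < Q := exp_pos _
  have hcard : (2 * ((n : ℝ) + 1)) ^ (2 * d) ≤ P ^ 3 :=
    calc (2 * ((n : ℝ) + 1)) ^ (2 * d) ≤ (((n : ℝ) + 1) ^ 3) ^ (2 * d) :=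
          pow_le_pow_left₀ (by positivity) (by nlinarith [sq_nonneg ((n : ℝ) + 1)]) _
      _ = P ^ 3 := by rw [← pow_mul, ← pow_mul, mul_comm]
  have hexp : exp (-2 * (ε / 6) ^ 2 / n) ≤ Q ^ 4 := by
    rw [← exp_nat_mul, exp_le_exp]
    have h₁ : -2 * (ε / 6) ^ 2 / n = -(ε ^ 2 / n) / 18 := by ring
    have h₂ : ((4 : ℕ) : ℝ) * (-(ε ^ 2) / (288 * n)) = -(ε ^ 2 / n) / 72 := by push_cast; ring
    have : 0 ≤ ε ^ 2 / n := by positivity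
    rw [h₁, h₂]
    linarith
  calc (2 * ((n : ℝ) + 1)) ^ (2 * d) * (3 * (2 * exp (-2 * (ε / 6) ^ 2 / n)))
      ≤ P ^ 3 * (3 * (2 * Q ^ 4)) := by gcongr
    _ = 6 * Q * (P * Q) ^ 3 := by ring
    _ ≤ 6 * Q * 1 := by gcongr; exact pow_le_one₀ (by positivity) h
    _ ≤ 24 * P * Q := by nlinarith

end Arithmetic

theorem stmt12_general {Ω θ : Type*} [MeasurableSpace Ω] [MeasurableSpace θ]
    (μ : Measure Ω) [IsProbabilityMeasure μ] (n d : ℕ)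
    -- the original sample and the independent second sample
    (X Xd : Fin n → Ω → (Fin d → ℝ))
    (hXm : ∀ j, Measurable (X j)) (hXdm : ∀ j, Measurable (Xd j))
    (hXindep : iIndepFun X μ)
    (hXdindep : iIndepFun Xd μ)
    (hid : ∀ j j', Measure.map (X j) μ = Measure.map (Xd j') μ)
    -- the bootstrap indices Θ¹ : i.i.d. uniform, and extra tree randomness Θ² = T,
    -- both independent of the data
    (I : Fin n → Ω → Fin n) (hIm : ∀ j, Measurable (I j)) (T : Ω → θ)
    (hIindep : iIndepFun I μ)
    (hIunif : ∀ j κ, μ {ω | I j ω = κ} = (n : ENNReal)⁻¹)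
    (hITX : IndepFun (fun ω => (fun j => I j ω, T ω)) (fun ω => fun j => X j ω) μ)
    -- the tree cell containing x is a box built measurably from (D_n, Θ)
    (g : ((Fin n → (Fin d → ℝ)) × (Fin n → Fin n) × θ) →
      (Fin d → EReal) × (Fin d → EReal))
    (ε : ℝ) (hε : 0 < ε) :
    (μ {ω | ε <
        |(∑ j, Set.indicator
            (cellOf (g (fun j => X j ω, fun j => I j ω, T ω)).1
                    (g (fun j => X j ω, fun j => I j ω, T ω)).2)
            (fun _ => (1 : ℝ)) (X (I j ω) ω))
          - ∑ j, Set.indicator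
            (cellOf (g (fun j => X j ω, fun j => I j ω, T ω)).1
                    (g (fun j => X j ω, fun j => I j ω, T ω)).2)
            (fun _ => (1 : ℝ)) (Xd j ω)|}).toReal ≤
      24 * (n + 1) ^ (2 * d) * Real.exp (-(ε ^ 2) / (288 * n)) := by
  rcases le_or_gt (n : ℝ) ε with hεn | hεn
  · refine (measureReal_mono (s₂ := ∅) fun ω hω => ?_).trans
      (by rw [measureReal_empty]; positivity)
    exact (mem_ofPred.1 hω).not_ge
      ((abs_sampleCount_sub_sampleCount_le_card _ _ _ _).trans (by simpa using hεn))
  by_cases htriv : 1 ≤ 24 * ((n : ℝ) + 1) ^ (2 * d) * Real.exp (-(ε ^ 2) / (288 * n))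
  · exact measureReal_le_one.trans htriv
  have hPQ : ((n : ℝ) + 1) ^ (2 * d) * Real.exp (-(ε ^ 2) / (288 * n)) ≤ 1 := by
    have : 0 < ((n : ℝ) + 1) ^ (2 * d) * Real.exp (-(ε ^ 2) / (288 * n)) := by positivity
    linarith
  have hn : 0 < n := by exact_mod_cast hε.trans hεn
  have hδε : (Fintype.card (Fin n) : ℝ) * (2 * d / n) ≤ ε / 2 := by
    rw [Fintype.card_fin, mul_div_cancel₀ _ (by positivity)]
    linarith [four_mul_le_of_pow_mul_exp_le_one hε hεn hPQ]
  set j₀ : Fin n := ⟨0, hn⟩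
  have : IsProbabilityMeasure (μ.map (X j₀)) :=
    Measure.isProbabilityMeasure_map (hXm j₀).aemeasurable
  obtain ⟨B, hB⟩ := exists_isBracketing_cellOf (μ.map (X j₀)) hn
  refine (measureReal_mono fun ω hω => exists_deviation_of_isBracketing hB (by positivity) hδε
    (g (fun j => X j ω, fun j => I j ω, T ω)) (fun j => X j ω) hω).trans
    ((measureReal_exists_deviation_le hn hXm hXdm hXindep hXdindep
      (fun j => (hid j j₀).trans (hid j₀ j₀).symm) (fun j => (hid j₀ j).symm) hIm hIindep hIunif
      (hITX.symm.comp measurable_id measurable_fst) hB.1 (by positivity)).trans ?_)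
  rw [card_boxIndex]
  push_cast
  exact card_mul_hoeffding_le_of_pow_mul_exp_le_one hn hPQ

theorem stmt12 {Ω θ : Type*} [MeasurableSpace Ω] [MeasurableSpace θ]
    (μ : Measure Ω) [IsProbabilityMeasure μ] (n d : ℕ)
    -- the original sample and the independent second sample
    (X Xd : Fin n → Ω → (Fin d → ℝ))
    (hXm : ∀ j, Measurable (X j)) (hXdm : ∀ j, Measurable (Xd j))
    (hXindep : iIndepFun X μ)
    (hXdindep : iIndepFun Xd μ)
    (hid : ∀ j j', Measure.map (X j) μ = Measure.map (Xd j') μ)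
    -- the bootstrap indices Θ¹ : i.i.d. uniform, and extra tree randomness Θ² = T,
    -- both independent of the data
    (I : Fin n → Ω → Fin n) (hIm : ∀ j, Measurable (I j)) (T : Ω → θ) (hTm : Measurable T)
    (hIindep : iIndepFun I μ)
    (hIunif : ∀ j κ, μ {ω | I j ω = κ} = (n : ENNReal)⁻¹)
    (hITX : IndepFun (fun ω => (fun j => I j ω, T ω)) (fun ω => fun j => X j ω) μ)
    -- the second sample is independent of everything used to build the tree
    (hsep : IndepFun (fun ω => (fun j => X j ω, fun j => I j ω, T ω))
      (fun ω => fun j => Xd j ω) μ)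
    -- the tree cell containing x is a box built measurably from (D_n, Θ)
    (g : ((Fin n → (Fin d → ℝ)) × (Fin n → Fin n) × θ) →
      (Fin d → EReal) × (Fin d → EReal))
    (hg : Measurable g)
    (ε : ℝ) (hε : 0 < ε) :
    (μ {ω | ε <
        |(∑ j, Set.indicator
            (cellOf (g (fun j => X j ω, fun j => I j ω, T ω)).1
                    (g (fun j => X j ω, fun j => I j ω, T ω)).2)
            (fun _ => (1 : ℝ)) (X (I j ω) ω))
          - ∑ j, Set.indicator
            (cellOf (g (fun j => X j ω, fun j => I j ω, T ω)).1
                    (g (fun j => X j ω, fun j => I j ω, T ω)).2)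
            (fun _ => (1 : ℝ)) (Xd j ω)|}).toReal ≤
      24 * (n + 1) ^ (2 * d) * Real.exp (-(ε ^ 2) / (288 * n)) :=
  stmt12_general μ n d X Xd hXm hXdm hXindep hXdindep hid I hIm T hIindep hIunif hITX g ε hε
end
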